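/- arXiv:1310.1012 — 8 statements merged into one kernel-verified Lean document; each statement's English description precedes it below -/
import Mathlib

section
/- If U and V are two crossing involution modules of a symmetric 2-structure G, then U ∪ V is also an involution module of G. -/
/-!
A common element `w` of `U` and `V` links any `u ∈ U` to any `v ∈ V`: outside `U ∪ V` the
neighborhoods of `u` and `w` agree up to `I` (as `U` is a module), and so do those of `w`
and `v`. Since `I ∘ I = id`, composing the two relations again gives "equal or `I`-swapped".
-/

/-- Two subsets `A`, `B` of `X` are *crossing* if `A ∩ B`, `A \ B`, `B \ A` are all
nonempty and `A ∪ B ≠ X`. -/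
def Crossing {X : Type*} (A B : Set X) : Prop :=
  (A ∩ B).Nonempty ∧ (A \ B).Nonempty ∧ (B \ A).Nonempty ∧ A ∪ B ≠ Set.univ

/-- `U` is an involution module of the symmetric 2-structure `(X, E)` w.r.t. the
involution `I` of the colors: any two elements of `U` have identical or `I`-swapped
colored neighborhoods outside `U`. -/
def IsInvolutionModule {X : Type*} (E : X → X → ℕ) (I : ℕ → ℕ) (U : Set X) : Prop :=
  ∀ u ∈ U, ∀ v ∈ U,
    (∀ i : ℕ, {x | x ∉ U ∧ E u x = i} = {x | x ∉ U ∧ E v x = i}) ∨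
    (∀ i : ℕ, {x | x ∉ U ∧ E u x = i} = {x | x ∉ U ∧ E v x = I i})

section NeighborhoodOutside

variable {X : Type*} (E : X → X → ℕ)

def NbhdRelabel (W : Set X) (f : ℕ → ℕ) (u v : X) : Prop :=
  ∀ i : ℕ, {x | x ∉ W ∧ E u x = i} = {x | x ∉ W ∧ E v x = f i}

variable {E}

theorem NbhdRelabel.mono {A B : Set X} {f : ℕ → ℕ} {u v : X} (hAB : A ⊆ B)
    (h : NbhdRelabel E A f u v) : NbhdRelabel E B f u v := by
  intro i
  ext x
  by_cases hxB : x ∈ B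
  · simp [hxB]
  · have hxA : x ∉ A := fun hxA => hxB (hAB hxA)
    simpa [hxA, hxB] using Set.ext_iff.mp (h i) x

theorem NbhdRelabel.trans {W : Set X} {f g : ℕ → ℕ} {u w v : X}
    (huw : NbhdRelabel E W f u w) (hwv : NbhdRelabel E W g w v) :
    NbhdRelabel E W (g ∘ f) u v :=
  fun i => (huw i).trans (hwv (f i))

end NeighborhoodOutside

section Union

variable {X : Type*} {E : X → X → ℕ} {I : ℕ → ℕ}

def NbhdEquiv (E : X → X → ℕ) (I : ℕ → ℕ) (W : Set X) (u v : X) : Prop :=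
  NbhdRelabel E W id u v ∨ NbhdRelabel E W I u v

theorem NbhdEquiv.mono {A B : Set X} {u v : X} (hAB : A ⊆ B) (h : NbhdEquiv E I A u v) :
    NbhdEquiv E I B u v :=
  h.imp (NbhdRelabel.mono hAB) (NbhdRelabel.mono hAB)

theorem NbhdEquiv.trans (hinv : ∀ i, I (I i) = i) {W : Set X} {u w v : X}
    (huw : NbhdEquiv E I W u w) (hwv : NbhdEquiv E I W w v) : NbhdEquiv E I W u v := by
  have hII : I ∘ I = id := funext hinv
  rcases huw with huw | huw <;> rcases hwv with hwv | hwv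
  · exact Or.inl (huw.trans hwv)
  · exact Or.inr (huw.trans hwv)
  · exact Or.inr (huw.trans hwv)
  · exact Or.inl (hII ▸ huw.trans hwv)

theorem IsInvolutionModule.nbhdEquiv_of_subset {U W : Set X} (hU : IsInvolutionModule E I U)
    (hUW : U ⊆ W) {u v : X} (hu : u ∈ U) (hv : v ∈ U) : NbhdEquiv E I W u v :=
  NbhdEquiv.mono hUW (hU u hu v hv)

theorem IsInvolutionModule.union (hinv : ∀ i, I (I i) = i) {U V : Set X}
    (hU : IsInvolutionModule E I U) (hV : IsInvolutionModule E I V)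
    (hUV : (U ∩ V).Nonempty) : IsInvolutionModule E I (U ∪ V) := by
  obtain ⟨w, hwU, hwV⟩ := hUV
  have relU : ∀ {u v}, u ∈ U → v ∈ U → NbhdEquiv E I (U ∪ V) u v :=
    hU.nbhdEquiv_of_subset Set.subset_union_left
  have relV : ∀ {u v}, u ∈ V → v ∈ V → NbhdEquiv E I (U ∪ V) u v :=
    hV.nbhdEquiv_of_subset Set.subset_union_right
  rintro u (hu | hu) v (hv | hv)
  · exact relU hu hv
  · exact (relU hu hwU).trans hinv (relV hwV hv)
  · exact (relV hu hwV).trans hinv (relU hwU hv)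
  · exact relV hu hv

end Union

theorem union_of_crossing_involutionModules_general {X : Type*}
    (E : X → X → ℕ)
    (I : ℕ → ℕ) (hinv : ∀ i, I (I i) = i)
    (U V : Set X) (hU : IsInvolutionModule E I U) (hV : IsInvolutionModule E I V)
    (hcross : Crossing U V) :
    IsInvolutionModule E I (U ∪ V) :=
  hU.union hinv hV hcross.1

/-- If `U` and `V` are two crossing involution modules of a symmetric 2-structure `G`,
then `U ∪ V` is also an involution module of `G`. -/
theorem union_of_crossing_involutionModules {X : Type*} [Fintype X]
    (E : X → X → ℕ) (hsymm : ∀ x y, E x y = E y x)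
    (I : ℕ → ℕ) (hinv : ∀ i, I (I i) = i) (hfpf : ∀ i, I i ≠ i)
    (U V : Set X) (hU : IsInvolutionModule E I U) (hV : IsInvolutionModule E I V)
    (hcross : Crossing U V) :
    IsInvolutionModule E I (U ∪ V) :=
  union_of_crossing_involutionModules_general E I hinv U V hU hV hcross
end

section
/- If U and V are two crossing involution modules of a symmetric 2-structure G, then U ∩ V is also an involution module of G. -/
open Function

section InvolutionModule

variable {X : Type*} (E : X → X → ℕ)

theorem colorClasses_eq_iff {f : ℕ → ℕ} (hf : Injective f) (W : Set X) (u v : X) :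
    (∀ i, {x | x ∉ W ∧ E u x = i} = {x | x ∉ W ∧ E v x = f i}) ↔
      ∀ x ∉ W, E v x = f (E u x) := by
  refine ⟨fun h x hx => ((h (E u x)).subset ⟨hx, rfl⟩).2, fun h i => ?_⟩
  ext x
  constructor
  · rintro ⟨hx, rfl⟩
    exact ⟨hx, h x hx⟩
  · rintro ⟨hx, hi⟩
    exact ⟨hx, hf ((h x hx).symm.trans hi)⟩

theorem isInvolutionModule_iff {I : ℕ → ℕ} (hI : Injective I) (U : Set X) :
    IsInvolutionModule E I U ↔ ∀ u ∈ U, ∀ v ∈ U,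
      (∀ x ∉ U, E v x = E u x) ∨ ∀ x ∉ U, E v x = I (E u x) := by
  refine forall₄_congr fun u _ v _ => or_congr ?_ (colorClasses_eq_iff E hI U u v)
  exact colorClasses_eq_iff E injective_id U u v

theorem IsInvolutionModule.inter {I : ℕ → ℕ} (hinv : Involutive I) (hfpf : ∀ i, I i ≠ i)
    {U V : Set X} (hU : IsInvolutionModule E I U) (hV : IsInvolutionModule E I V)
    (hUV : U ∪ V ≠ Set.univ) : IsInvolutionModule E I (U ∩ V) := by
  obtain ⟨w, hw⟩ := (Set.ne_univ_iff_exists_notMem _).mp hUV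
  have hwU : w ∉ U := fun h => hw (Or.inl h)
  have hwV : w ∉ V := fun h => hw (Or.inr h)
  rw [isInvolutionModule_iff E hinv.injective] at hU hV ⊢
  rintro u ⟨huU, huV⟩ v ⟨hvU, hvV⟩
  have outside_inter {P : X → Prop} (hPU : ∀ x ∉ U, P x) (hPV : ∀ x ∉ V, P x) :
      ∀ x ∉ U ∩ V, P x :=
    fun x hx => (not_and_or.mp hx).elim (hPU x) (hPV x)
  rcases hU u huU v hvU with hsU | hswU <;> rcases hV u huV v hvV with hsV | hswV
  · exact Or.inl (outside_inter hsU hsV)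
  · exact absurd ((hswV w hwV).symm.trans (hsU w hwU)) (hfpf _)
  · exact absurd ((hswU w hwU).symm.trans (hsV w hwV)) (hfpf _)
  · exact Or.inr (outside_inter hswU hswV)

end InvolutionModule

theorem inter_of_crossing_involutionModules_general {X : Type*}
    (E : X → X → ℕ)
    (I : ℕ → ℕ) (hinv : ∀ i, I (I i) = i) (hfpf : ∀ i, I i ≠ i)
    (U V : Set X) (hU : IsInvolutionModule E I U) (hV : IsInvolutionModule E I V)
    (hcross : Crossing U V) :
    IsInvolutionModule E I (U ∩ V) :=
  hU.inter E hinv hfpf hV hcross.2.2.2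

/-- If `U` and `V` are two crossing involution modules of a symmetric 2-structure `G`,
then `U ∩ V` is also an involution module of `G`. -/
theorem inter_of_crossing_involutionModules {X : Type*} [Fintype X]
    (E : X → X → ℕ) (hsymm : ∀ x y, E x y = E y x)
    (I : ℕ → ℕ) (hinv : ∀ i, I (I i) = i) (hfpf : ∀ i, I i ≠ i)
    (U V : Set X) (hU : IsInvolutionModule E I U) (hV : IsInvolutionModule E I V)
    (hcross : Crossing U V) :
    IsInvolutionModule E I (U ∩ V) :=
  inter_of_crossing_involutionModules_general E I hinv hfpf U V hU hV hcross
end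

section
/- If U and V are two crossing involution modules of a symmetric 2-structure G, then U ∖ V is also an involution module of G. -/
/-!
Call `u` and `v` alike from outside `W` if `E v x = f (E u x)` for all `x ∉ W`, for one
`f ∈ {id, I}`; involution modules are the sets whose elements are pairwise alike from outside.
Given `u, v ∈ U \ V` alike via `f` from outside `U`, it remains to compare them from
`x ∈ U ∩ V`. Pick `z ∈ V \ U`; since `x, z ∈ V` are alike via some `g ∈ {id, I}` from outside `V`,
`g (E x v) = E z v = f (E z u) = f (g (E x u)) = g (f (E x u))`, and `g` is injective.
-/

namespace IsInvolutionModule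

variable {X : Type*} {E : X → X → ℕ} {I : ℕ → ℕ}

theorem injective_of_mem_pair (hI : Function.Involutive I) {f : ℕ → ℕ}
    (hf : f ∈ ({id, I} : Set (ℕ → ℕ))) : f.Injective := by
  rcases hf with rfl | rfl
  exacts [Function.injective_id, hI.injective]

theorem comm_of_mem_pair {f g : ℕ → ℕ} (hf : f ∈ ({id, I} : Set (ℕ → ℕ)))
    (hg : g ∈ ({id, I} : Set (ℕ → ℕ))) (i : ℕ) : f (g i) = g (f i) := by
  rcases hf with rfl | rfl <;> rcases hg with rfl | rfl <;> rfl

theorem colorClasses_eq_iff {W : Set X} {u v : X} {f : ℕ → ℕ} (hf : f.Injective) :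
    (∀ i, {x | x ∉ W ∧ E u x = i} = {x | x ∉ W ∧ E v x = f i}) ↔
      ∀ x ∉ W, E v x = f (E u x) := by
  constructor
  · intro h x hx
    have hmem : x ∈ {y | y ∉ W ∧ E u y = E u x} := ⟨hx, rfl⟩
    rw [h] at hmem
    exact hmem.2
  · intro h i
    ext x
    refine and_congr_right fun hx => ?_
    rw [h x hx, hf.eq_iff]

theorem iff_exists_mem_pair (hI : Function.Involutive I) {U : Set X} :
    IsInvolutionModule E I U ↔
      ∀ u ∈ U, ∀ v ∈ U, ∃ f ∈ ({id, I} : Set (ℕ → ℕ)), ∀ x ∉ U, E v x = f (E u x) := by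
  refine forall₂_congr fun u _ => forall₂_congr fun v _ => ?_
  simp only [Set.mem_insert_iff, Set.mem_singleton_iff, exists_eq_or_imp, exists_eq_left]
  exact or_congr (colorClasses_eq_iff (f := id) Function.injective_id)
    (colorClasses_eq_iff hI.injective)

theorem edge_eq_of_edge_eq (hsymm : ∀ x y, E x y = E y x) (hI : Function.Involutive I)
    {V : Set X} (hV : IsInvolutionModule E I V) {f : ℕ → ℕ}
    (hf : f ∈ ({id, I} : Set (ℕ → ℕ))) {u v z x : X} (hu : u ∉ V) (hv : v ∉ V)
    (hz : z ∈ V) (hx : x ∈ V) (huv : E v z = f (E u z)) : E v x = f (E u x) := by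
  obtain ⟨g, hg, hxz⟩ := (iff_exists_mem_pair hI).1 hV x hx z hz
  have : g (E x v) = g (f (E x u)) := by
    rw [← hxz v hv, hsymm z v, huv, hsymm u z, hxz u hu, comm_of_mem_pair hf hg]
  rw [hsymm v x, hsymm u x]
  exact injective_of_mem_pair hI hg this

end IsInvolutionModule

open IsInvolutionModule in
theorem sdiff_of_crossing_involutionModules_general {X : Type*}
    (E : X → X → ℕ) (hsymm : ∀ x y, E x y = E y x)
    (I : ℕ → ℕ) (hinv : ∀ i, I (I i) = i)
    (U V : Set X) (hU : IsInvolutionModule E I U) (hV : IsInvolutionModule E I V)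
    (hcross : Crossing U V) :
    IsInvolutionModule E I (U \ V) := by
  obtain ⟨-, -, ⟨z, hzV, hzU⟩, -⟩ := hcross
  rw [iff_exists_mem_pair hinv]
  rintro u ⟨huU, huV⟩ v ⟨hvU, hvV⟩
  obtain ⟨f, hf, huv⟩ := (iff_exists_mem_pair hinv).1 hU u huU v hvU
  refine ⟨f, hf, fun x hx => ?_⟩
  by_cases hxU : x ∈ U
  · have hxV : x ∈ V := by_contra fun hxV => hx ⟨hxU, hxV⟩
    exact edge_eq_of_edge_eq hsymm hinv hV hf huV hvV hzV hxV (huv z hzU)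
  · exact huv x hxU

/-- If `U` and `V` are two crossing involution modules of a symmetric 2-structure `G`,
then `U \ V` is also an involution module of `G`. -/
theorem sdiff_of_crossing_involutionModules {X : Type*} [Fintype X]
    (E : X → X → ℕ) (hsymm : ∀ x y, E x y = E y x)
    (I : ℕ → ℕ) (hinv : ∀ i, I (I i) = i) (hfpf : ∀ i, I i ≠ i)
    (U V : Set X) (hU : IsInvolutionModule E I U) (hV : IsInvolutionModule E I V)
    (hcross : Crossing U V) :
    IsInvolutionModule E I (U \ V) :=
  sdiff_of_crossing_involutionModules_general E hsymm I hinv U V hU hV hcross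
end

section
/- Let G=(X,E) be a symmetric 2-structure, s ∈ X, and G' = G⊙_s the 2-structure obtained from G by applying the Switch Colors operator at s. If U ⊂ X contains s and U is an involution module of G, then X∖U is a module of G'. -/
/-- `M` is a module of a 2-structure with colors in `C`: all elements of `M` have
identical colored neighborhoods outside `M`. -/
def IsModuleG {X C : Type*} (E : X → X → C) (M : Set X) : Prop :=
  ∀ m ∈ M, ∀ m' ∈ M, ∀ i : C, {x | x ∉ M ∧ E m x = i} = {x | x ∉ M ∧ E m' x = i}

/-- Canonical representative of the orbit of a triple of colors `(i, j, k)` under the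
identifications `(i, j, k) ~ (I i, j, I k) ~ (i, I j, I k) ~ (I i, I j, k)`.  These are
exactly the identifications `Δ_{i,j} = Δ_{I(i),j}` (for triples of the form `(i,i,j)` or
`(i, I i, I j)`) and `Δ_{{i,j},k} = Δ_{{I(i),j},I(k)} = Δ_{{i,I(j)},I(k)} = Δ_{{I(i),I(j)},k}`
defining the fresh colors of the Switch Colors operator. -/
def tripNorm (I : ℕ → ℕ) (t : ℕ × ℕ × ℕ) : ℕ × ℕ × ℕ :=
  let t1 := if t.1 ≤ I t.1 then t else (I t.1, t.2.1, I t.2.2)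
  if t1.2.1 ≤ I t1.2.1 then t1 else (t1.1, I t1.2.1, I t1.2.2)

/-- The *Switch Colors* operator `⊙ : C³ → C'`, where the extended color set `C'` is
realized as `ℕ ⊕ (ℕ × ℕ × ℕ)`: old colors are `Sum.inl`-colors and the fresh colors `Δ`
are `Sum.inr` of canonical orbit representatives.  It satisfies `⊙(i,j,i) = j`,
`⊙(i,j,I(i)) = I(j)`, `⊙(i,i,j) = ⊙(i,I(i),I(j)) = Δ_{i,j} = Δ_{I(i),j}` for
`j ∉ {i, I(i)}`, and `⊙(i,j,k) = Δ_{{i,j},k}` (fresh, with the prescribed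
identifications) in the remaining cases. -/
def odot (I : ℕ → ℕ) (i j k : ℕ) : ℕ ⊕ (ℕ × ℕ × ℕ) :=
  if k = i then Sum.inl j
  else if k = I i then Sum.inl (I j)
  else Sum.inr (tripNorm I (i, j, k))

/-- The 2-structure `G ⊙_s` obtained from `G = (X, E)` by applying the Switch Colors
operator at the pivot `s`: its vertex set is `X \ {s}` and the color of an edge
`(u, v)` is `⊙(E(s,u), E(s,v), E(u,v))`. -/
def switchAt {X : Type*} (E : X → X → ℕ) (I : ℕ → ℕ) (s : X) :
    {x : X // x ≠ s} → {x : X // x ≠ s} → ℕ ⊕ (ℕ × ℕ × ℕ) :=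
  fun u v => odot I (E s u) (E s v) (E u v)

/-!
Fix `x ∈ U \ {s}`. Since `s` and `x` lie in the involution module `U`, either `E x m = E s m`
for every `m ∉ U`, or `E x m = I (E s m)` for every `m ∉ U`. In the first case
`⊙(E s m, E s x, E m x) = E s x` and in the second it is `I (E s x)`; either way the color of
`mx` in `G ⊙_s` does not depend on `m ∉ U`, which is what it means for `X \ U` to be a module.
-/

theorem IsInvolutionModule.eq_or_eq_inv {X : Type*} {E : X → X → ℕ} {I : ℕ → ℕ} {U : Set X}
    (hU : IsInvolutionModule E I U) {u v : X} (hu : u ∈ U) (hv : v ∈ U) :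
    (∀ y ∉ U, E v y = E u y) ∨ (∀ y ∉ U, E v y = I (E u y)) := by
  rcases hU u hu v hv with h | h
  · exact Or.inl fun y hy => (h (E u y) ▸ ⟨hy, rfl⟩ : y ∈ {x | x ∉ U ∧ E v x = E u y}).2
  · exact Or.inr fun y hy => (h (E u y) ▸ ⟨hy, rfl⟩ : y ∈ {x | x ∉ U ∧ E v x = I (E u y)}).2

theorem isModuleG_of_forall_eq {X C : Type*} {E : X → X → C} {M : Set X}
    (h : ∀ m ∈ M, ∀ m' ∈ M, ∀ x ∉ M, E m x = E m' x) : IsModuleG E M := by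
  intro m hm m' hm' i
  ext x
  exact and_congr_right fun hx => by rw [h m hm m' hm' x hx]

theorem odot_self (I : ℕ → ℕ) (i j : ℕ) : odot I i j i = Sum.inl j :=
  if_pos rfl

theorem odot_inv {I : ℕ → ℕ} {i : ℕ} (hI : I i ≠ i) (j : ℕ) :
    odot I i j (I i) = Sum.inl (I j) := by
  simp [odot, hI]

theorem compl_module_of_involutionModule_general {X : Type*}
    (E : X → X → ℕ) (hsymm : ∀ x y, E x y = E y x)
    (I : ℕ → ℕ) (hfpf : ∀ i, I i ≠ i)
    (s : X) (U : Set X) (hsU : s ∈ U)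
    (hU : IsInvolutionModule E I U) :
    IsModuleG (switchAt E I s) {x : {x : X // x ≠ s} | (x : X) ∉ U} := by
  refine isModuleG_of_forall_eq fun m hm m' hm' x hx => ?_
  have hxU : (x : X) ∈ U := not_not.mp hx
  unfold switchAt
  rw [hsymm m, hsymm m']
  rcases hU.eq_or_eq_inv hsU hxU with h | h
  · rw [h m hm, h m' hm', odot_self, odot_self]
  · rw [h m hm, h m' hm', odot_inv (hfpf _), odot_inv (hfpf _)]

/-- If `U ⊂ X` contains the pivot `s` and `U` is an involution module of `G`, then
`X \ U` is a module of `G ⊙_s`. -/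
theorem compl_module_of_involutionModule {X : Type*} [Fintype X]
    (E : X → X → ℕ) (hsymm : ∀ x y, E x y = E y x)
    (I : ℕ → ℕ) (hinv : ∀ i, I (I i) = i) (hfpf : ∀ i, I i ≠ i)
    (s : X) (U : Set X) (hsU : s ∈ U) (hUne : U ≠ Set.univ)
    (hU : IsInvolutionModule E I U) :
    IsModuleG (switchAt E I s) {x : {x : X // x ≠ s} | (x : X) ∉ U} :=
  compl_module_of_involutionModule_general E hsymm I hfpf s U hsU hU
end

section
/- Let G=(X,E) be a symmetric 2-structure, s ∈ X, G' = G⊙_s, and U ⊂ X with s ∈ U. Then X∖U is a module of G' if and only if U is an involution module of G or X∖U is an involution module of G. -/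
/-!
For `m ∉ U` and `x ∈ U \ {s}` the edge `mx` of `G ⊙_s` has color
`⊙(E(s,m), E(s,x), E(m,x))`, which is `E(s,x)`, `I(E(s,x))` or a fresh color according as
`E(m,x)` equals `E(s,m)`, equals `I(E(s,m))`, or neither; moreover `⊙(a,b,·)` is injective.

If every `x ∈ U` is equal or flipped to `s` on `X \ U`, then `U` is an involution module.
Otherwise some `x₀ ∈ U` is neither, and the module property of `X \ U` forces all edges from
`x₀` to `X \ U` to get fresh colors. A fresh color determines its first argument up to `I`, so
`E(s,m') = E(s,m)` or `E(s,m') = I(E(s,m))` for all `m, m' ∉ U`; injectivity of `⊙(a,b,·)`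
then makes `m` and `m'` equal or flipped on all of `U`, i.e. `X \ U` is an involution module.
The converse is a direct computation, using `⊙(I a, b, I e) = ⊙(a, b, e)`.
-/

open Set

section SwitchColors

variable {I : ℕ → ℕ}

theorem tripNorm_fst_eq_or (a b e : ℕ) :
    (tripNorm I (a, b, e)).1 = a ∨ (tripNorm I (a, b, e)).1 = I a := by
  simp only [tripNorm]
  split_ifs <;> simp

theorem tripNorm_injective (hI : Function.Involutive I) (a b : ℕ) :
    Function.Injective fun e => tripNorm I (a, b, e) := by
  intro e e' h
  simp only [tripNorm] at h
  split_ifs at h <;> simpa [hI.injective.eq_iff] using h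

theorem tripNorm_inv_inv (hI : Function.Involutive I) (hfpf : ∀ i, I i ≠ i) (a b e : ℕ) :
    tripNorm I (I a, b, I e) = tripNorm I (a, b, e) := by
  have : a < I a ∨ I a < a := (hfpf a).symm.lt_or_gt
  unfold tripNorm
  simp only [hI a, hI e]
  split_ifs <;> first | rfl | omega

@[simp]
theorem odot_self_s9 (a b : ℕ) : odot I a b a = .inl b := by
  simp [odot]

theorem odot_inv_s9 (hfpf : ∀ i, I i ≠ i) (a b : ℕ) : odot I a b (I a) = .inl (I b) := by
  simp [odot, hfpf a]

theorem odot_of_ne {a b e : ℕ} (ha : e ≠ a) (hIa : e ≠ I a) :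
    odot I a b e = .inr (tripNorm I (a, b, e)) := by
  simp [odot, ha, hIa]

theorem odot_inv_inv (hI : Function.Involutive I) (hfpf : ∀ i, I i ≠ i) (a b e : ℕ) :
    odot I (I a) b (I e) = odot I a b e := by
  by_cases ha : e = a
  · subst ha; simp
  by_cases hIa : e = I a
  · subst hIa; rw [odot_inv_s9 hfpf, odot_inv_s9 hfpf]
  rw [odot_of_ne ha hIa, odot_of_ne (hI.injective.ne ha), tripNorm_inv_inv hI hfpf]
  rwa [hI a, Ne, hI.eq_iff]

theorem odot_injective (hI : Function.Involutive I) (hfpf : ∀ i, I i ≠ i) (a b : ℕ) :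
    Function.Injective (odot I a b) := by
  intro e e' h
  unfold odot at h
  split_ifs at h
  · subst_vars; rfl
  · exact absurd (Sum.inl.inj h) (hfpf b).symm
  · exact absurd (Sum.inl.inj h) (hfpf b)
  · subst_vars; rfl
  · exact tripNorm_injective hI a b (Sum.inr.inj h)

theorem eq_of_odot_eq_inl (hI : Function.Involutive I) (hfpf : ∀ i, I i ≠ i) {a b e : ℕ}
    (h : odot I a b e = .inl b) : e = a :=
  odot_injective hI hfpf a b (h.trans (odot_self_s9 a b).symm)

theorem eq_inv_of_odot_eq_inl_inv (hI : Function.Involutive I) (hfpf : ∀ i, I i ≠ i)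
    {a b e : ℕ} (h : odot I a b e = .inl (I b)) : e = I a :=
  odot_injective hI hfpf a b (h.trans (odot_inv_s9 hfpf a b).symm)

theorem eq_or_eq_inv_of_odot_eq (hI : Function.Involutive I) {a a' b e e' : ℕ}
    (ha : e ≠ a) (hIa : e ≠ I a) (h : odot I a b e = odot I a' b e') : a' = a ∨ a' = I a := by
  rw [odot_of_ne ha hIa] at h
  unfold odot at h
  split_ifs at h
  have hfst := congrArg Prod.fst (Sum.inr.inj h)
  rcases tripNorm_fst_eq_or (I := I) a b e with h₁ | h₁ <;>
    rcases tripNorm_fst_eq_or (I := I) a' b e' with h₂ | h₂ <;>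
    rw [h₁, h₂] at hfst <;> grind [hI a, hI a']

end SwitchColors

theorem fibers_eq_iff_eqOn {α β : Type*} {f g : α → β} {A : Set α} :
    (∀ i, {x | x ∉ A ∧ f x = i} = {x | x ∉ A ∧ g x = i}) ↔ EqOn f g Aᶜ := by
  refine ⟨fun h x hx => ?_, fun h i => ?_⟩
  · have hmem : x ∈ {y | y ∉ A ∧ f y = f x} := ⟨hx, rfl⟩
    rw [h] at hmem
    exact hmem.2.symm
  · ext x
    exact and_congr_right fun hx => by rw [h hx]

theorem isModuleG_iff_eqOn {X C : Type*} {E : X → X → C} {M : Set X} :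
    IsModuleG E M ↔ ∀ m ∈ M, ∀ m' ∈ M, EqOn (E m) (E m') Mᶜ := by
  simp only [IsModuleG, fibers_eq_iff_eqOn]

section EqOrFlipOn

variable {X : Type*} {E : X → X → ℕ} {I : ℕ → ℕ} {A U : Set X} {u v w : X}

def EqOrFlipOn (E : X → X → ℕ) (I : ℕ → ℕ) (A : Set X) (u v : X) : Prop :=
  EqOn (E u) (E v) A ∨ EqOn (E u) (I ∘ E v) A

theorem EqOrFlipOn.refl (E : X → X → ℕ) (I : ℕ → ℕ) (A : Set X) (u : X) :
    EqOrFlipOn E I A u u :=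
  .inl (eqOn_refl _ _)

theorem Function.Involutive.eqOn_comp_comm (hI : Function.Involutive I) {f g : X → ℕ} :
    EqOn f (I ∘ g) A ↔ EqOn g (I ∘ f) A :=
  ⟨fun h x hx => by simp [h hx, hI _], fun h x hx => by simp [h hx, hI _]⟩

theorem EqOrFlipOn.symm (hI : Function.Involutive I) (h : EqOrFlipOn E I A u v) :
    EqOrFlipOn E I A v u :=
  h.imp EqOn.symm hI.eqOn_comp_comm.1

theorem EqOrFlipOn.trans (hI : Function.Involutive I) (huv : EqOrFlipOn E I A u v)
    (hvw : EqOrFlipOn E I A v w) : EqOrFlipOn E I A u w := by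
  rcases huv with huv | huv <;> rcases hvw with hvw | hvw
  · exact .inl (huv.trans hvw)
  · exact .inr (huv.trans hvw)
  · exact .inr fun x hx => by simp [huv hx, hvw hx]
  · exact .inl fun x hx => by simp [huv hx, hvw hx, hI _]

theorem isInvolutionModule_iff_forall_eqOrFlipOn (hI : Function.Involutive I) :
    IsInvolutionModule E I U ↔ ∀ u ∈ U, ∀ v ∈ U, EqOrFlipOn E I Uᶜ u v := by
  have hflip : ∀ v i, {x | x ∉ U ∧ E v x = I i} = {x | x ∉ U ∧ (I ∘ E v) x = i} :=
    fun v i => by simp only [Function.comp_apply, hI.eq_iff]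
  simp only [IsInvolutionModule, EqOrFlipOn, hflip, fibers_eq_iff_eqOn]

theorem isInvolutionModule_iff_of_mem (hI : Function.Involutive I) {s : X} (hs : s ∈ U) :
    IsInvolutionModule E I U ↔ ∀ v ∈ U, EqOrFlipOn E I Uᶜ s v := by
  rw [isInvolutionModule_iff_forall_eqOrFlipOn hI]
  exact ⟨fun h v hv => h s hs v hv,
    fun h u hu v hv => ((h u hu).symm hI).trans hI (h v hv)⟩

end EqOrFlipOn

section SwitchAt

variable {X : Type*} {E : X → X → ℕ} {I : ℕ → ℕ} {s : X} {U : Set X}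

theorem IsModuleG.odot_eq_of_switchAt (hsU : s ∈ U)
    (hM : IsModuleG (switchAt E I s) {x : {x : X // x ≠ s} | (x : X) ∉ U})
    {m m' x : X} (hm : m ∉ U) (hm' : m' ∉ U) (hx : x ∈ U) (hxs : x ≠ s) :
    odot I (E s m) (E s x) (E m x) = odot I (E s m') (E s x) (E m' x) := by
  exact isModuleG_iff_eqOn.1 hM ⟨m, (ne_of_mem_of_not_mem hsU hm).symm⟩ hm
    ⟨m', (ne_of_mem_of_not_mem hsU hm').symm⟩ hm' (x := ⟨x, hxs⟩) (not_not_intro hx)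

theorem isModuleG_switchAt_of_odot_eq
    (h : ∀ m ∉ U, ∀ m' ∉ U, ∀ x ∈ U, x ≠ s →
      odot I (E s m) (E s x) (E m x) = odot I (E s m') (E s x) (E m' x)) :
    IsModuleG (switchAt E I s) {x : {x : X // x ≠ s} | (x : X) ∉ U} :=
  isModuleG_iff_eqOn.2 fun m hm m' hm' x hx => by exact h m hm m' hm' x (not_not.1 hx) x.2

theorem isModuleG_switchAt_of_isInvolutionModule (hsymm : ∀ x y, E x y = E y x)
    (hI : Function.Involutive I) (hfpf : ∀ i, I i ≠ i) (hsU : s ∈ U)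
    (hU : IsInvolutionModule E I U) :
    IsModuleG (switchAt E I s) {x : {x : X // x ≠ s} | (x : X) ∉ U} := by
  refine isModuleG_switchAt_of_odot_eq fun m hm m' hm' x hx _ => ?_
  rcases (isInvolutionModule_iff_of_mem hI hsU).1 hU x hx with h | h
  · rw [hsymm m, hsymm m', ← h hm, ← h hm', odot_self_s9, odot_self_s9]
  · have h' := hI.eqOn_comp_comm.1 h
    rw [hsymm m, hsymm m', h' hm, h' hm', Function.comp_apply, Function.comp_apply,
      odot_inv_s9 hfpf, odot_inv_s9 hfpf]

theorem isModuleG_switchAt_of_isInvolutionModule_compl (hsymm : ∀ x y, E x y = E y x)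
    (hI : Function.Involutive I) (hfpf : ∀ i, I i ≠ i) (hsU : s ∈ U)
    (hU : IsInvolutionModule E I Uᶜ) :
    IsModuleG (switchAt E I s) {x : {x : X // x ≠ s} | (x : X) ∉ U} := by
  refine isModuleG_switchAt_of_odot_eq fun m hm m' hm' x hx _ => ?_
  rcases (isInvolutionModule_iff_forall_eqOrFlipOn hI).1 hU m hm m' hm' with h | h <;>
    rw [compl_compl] at h
  · rw [hsymm s m, hsymm s m', h hsU, h hx]
  · rw [hsymm s m, h hsU, h hx, Function.comp_apply, Function.comp_apply, hsymm m' s,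
      odot_inv_inv hI hfpf]

theorem fresh_of_not_eqOrFlipOn (hsymm : ∀ x y, E x y = E y x) (hI : Function.Involutive I)
    (hfpf : ∀ i, I i ≠ i) (hsU : s ∈ U)
    (hM : IsModuleG (switchAt E I s) {x : {x : X // x ≠ s} | (x : X) ∉ U})
    {x₀ m : X} (hx₀ : x₀ ∈ U) (hx₀s : x₀ ≠ s) (h : ¬EqOrFlipOn E I Uᶜ s x₀) (hm : m ∉ U) :
    E m x₀ ≠ E s m ∧ E m x₀ ≠ I (E s m) := by
  simp only [EqOrFlipOn, EqOn, Function.comp_apply, not_or, not_forall] at h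
  obtain ⟨⟨m₀, hm₀, h₀⟩, ⟨m₁, hm₁, h₁⟩⟩ := h
  constructor
  · intro hsame
    have h₀' := hM.odot_eq_of_switchAt hsU hm hm₀ hx₀ hx₀s
    rw [hsame, odot_self_s9] at h₀'
    exact h₀ (by rw [hsymm x₀, eq_of_odot_eq_inl hI hfpf h₀'.symm])
  · intro hflip
    have h₁' := hM.odot_eq_of_switchAt hsU hm hm₁ hx₀ hx₀s
    rw [hflip, odot_inv_s9 hfpf] at h₁'
    exact h₁ (by rw [hsymm x₀, eq_inv_of_odot_eq_inl_inv hI hfpf h₁'.symm, hI])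

theorem eqOrFlipOn_of_fresh (hsymm : ∀ x y, E x y = E y x) (hI : Function.Involutive I)
    (hfpf : ∀ i, I i ≠ i) (hsU : s ∈ U)
    (hM : IsModuleG (switchAt E I s) {x : {x : X // x ≠ s} | (x : X) ∉ U})
    {x₀ m m' : X} (hx₀ : x₀ ∈ U) (hx₀s : x₀ ≠ s) (hm : m ∉ U) (hm' : m' ∉ U)
    (hfresh : E m x₀ ≠ E s m ∧ E m x₀ ≠ I (E s m)) :
    EqOrFlipOn E I U m m' := by
  rcases eq_or_eq_inv_of_odot_eq hI hfresh.1 hfresh.2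
    (hM.odot_eq_of_switchAt hsU hm hm' hx₀ hx₀s) with ha | ha
  · refine .inl fun y hy => ?_
    by_cases hys : y = s
    · rw [hys, hsymm m, hsymm m', ha]
    · have hy' := hM.odot_eq_of_switchAt hsU hm hm' hy hys
      rw [ha] at hy'
      exact odot_injective hI hfpf _ _ hy'
  · refine .inr fun y hy => ?_
    by_cases hys : y = s
    · rw [hys, Function.comp_apply, hsymm m, hsymm m', ha, hI]
    · have hy' := hM.odot_eq_of_switchAt hsU hm hm' hy hys
      rw [ha, ← hI (E m' y), odot_inv_inv hI hfpf] at hy'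
      exact odot_injective hI hfpf _ _ hy'

theorem isInvolutionModule_or_compl_of_isModuleG_switchAt (hsymm : ∀ x y, E x y = E y x)
    (hI : Function.Involutive I) (hfpf : ∀ i, I i ≠ i) (hsU : s ∈ U)
    (hM : IsModuleG (switchAt E I s) {x : {x : X // x ≠ s} | (x : X) ∉ U}) :
    IsInvolutionModule E I U ∨ IsInvolutionModule E I Uᶜ := by
  rw [isInvolutionModule_iff_of_mem hI hsU, isInvolutionModule_iff_forall_eqOrFlipOn hI,
    compl_compl]
  refine or_iff_not_imp_left.2 fun h m hm m' hm' => ?_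
  obtain ⟨x₀, hx₀, hns⟩ : ∃ x₀ ∈ U, ¬EqOrFlipOn E I Uᶜ s x₀ := by simpa using h
  have hx₀s : x₀ ≠ s := by
    rintro rfl
    exact hns (.refl E I _ _)
  exact eqOrFlipOn_of_fresh hsymm hI hfpf hsU hM hx₀ hx₀s hm hm'
    (fresh_of_not_eqOrFlipOn hsymm hI hfpf hsU hM hx₀ hx₀s hns hm)

end SwitchAt

theorem compl_module_iff_involutionModule_general {X : Type*}
    (E : X → X → ℕ) (hsymm : ∀ x y, E x y = E y x)
    (I : ℕ → ℕ) (hinv : ∀ i, I (I i) = i) (hfpf : ∀ i, I i ≠ i)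
    (s : X) (U : Set X) (hsU : s ∈ U) :
    IsModuleG (switchAt E I s) {x : {x : X // x ≠ s} | (x : X) ∉ U} ↔
      (IsInvolutionModule E I U ∨ IsInvolutionModule E I Uᶜ) := by
  refine ⟨isInvolutionModule_or_compl_of_isModuleG_switchAt hsymm hinv hfpf hsU, ?_⟩
  rintro (hU | hUc)
  · exact isModuleG_switchAt_of_isInvolutionModule hsymm hinv hfpf hsU hU
  · exact isModuleG_switchAt_of_isInvolutionModule_compl hsymm hinv hfpf hsU hUc

/-- For `s ∈ U ⊂ X`: `X \ U` is a module of `G ⊙_s` iff `U` is an involution module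
of `G` or `X \ U` is an involution module of `G`. -/
theorem compl_module_iff_involutionModule {X : Type*} [Fintype X]
    (E : X → X → ℕ) (hsymm : ∀ x y, E x y = E y x)
    (I : ℕ → ℕ) (hinv : ∀ i, I (I i) = i) (hfpf : ∀ i, I i ≠ i)
    (s : X) (U : Set X) (hsU : s ∈ U) (hUne : U ≠ Set.univ) :
    IsModuleG (switchAt E I s) {x : {x : X // x ≠ s} | (x : X) ∉ U} ↔
      (IsInvolutionModule E I U ∨ IsInvolutionModule E I Uᶜ) :=
  compl_module_iff_involutionModule_general E hsymm I hinv hfpf s U hsU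
end

section
/- A graph G is totally decomposable by involution modular decomposition (i.e., a switch cograph) if and only if for any vertex p, the graph obtained from G by a Seidel switch at p is a cograph. -/
open SimpleGraph

/-- `G` contains no induced copy of `H`. -/
def IsInducedFree {α β : Type*} (H : SimpleGraph α) (G : SimpleGraph β) : Prop :=
  IsEmpty (H ↪g G)

/-- The Gem: a path `P₄` (vertices `0-1-2-3`) together with a dominating vertex `4`. -/
def gem : SimpleGraph (Fin 5) :=
  SimpleGraph.fromRel (fun a b =>
    (a = 0 ∧ b = 1) ∨ (a = 1 ∧ b = 2) ∨ (a = 2 ∧ b = 3) ∨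
    (a = 4 ∧ (b = 0 ∨ b = 1 ∨ b = 2 ∨ b = 3)))

/-- The Bull: a triangle `0, 1, 2` with two pendant vertices `3` (adjacent to `0`)
and `4` (adjacent to `1`). -/
def bull : SimpleGraph (Fin 5) :=
  SimpleGraph.fromRel (fun a b =>
    (a = 0 ∧ b = 1) ∨ (a = 1 ∧ b = 2) ∨ (a = 0 ∧ b = 2) ∨
    (a = 3 ∧ b = 0) ∨ (a = 4 ∧ b = 1))

/-- A *switch cograph* is a graph with no induced Gem, co-Gem, Bull, or `C₅`. -/
def IsSwitchCograph {V : Type*} (G : SimpleGraph V) : Prop :=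
  IsInducedFree gem G ∧ IsInducedFree gemᶜ G ∧
    IsInducedFree bull G ∧ IsInducedFree (cycleGraph 5) G

/-- The Seidel switch of `G` at `p`: delete `p` and complement the adjacency between
the neighbors and the non-neighbors of `p`. -/
def seidelSwitch {V : Type*} (G : SimpleGraph V) (p : V) :
    SimpleGraph {v : V // v ≠ p} where
  Adj x y := Xor' (G.Adj x y) (Xor' (G.Adj p x) (G.Adj p y))
  symm := by
    constructor
    intro x y h
    have hc := G.adj_comm (x : V) (y : V)
    unfold Xor' at *
    unfold Xor at *
    tauto
  loopless := by
    constructor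
    intro x h
    unfold Xor' at h
    rcases h with ⟨ha, _⟩ | ⟨hx, hnx⟩
    · exact G.loopless.irrefl x ha
    · rcases hx with ⟨a, b⟩ | ⟨a, b⟩ <;> exact b a

/-!
Switching at `p` is undone by adjoining a new vertex adjacent to the former neighbours of `p`
and complementing the adjacency between these neighbours and the remaining vertices. Hence some
switch `seidelSwitch G p` contains an induced `P₄` iff `G` contains an induced copy of one of the
sixteen graphs `unswitch (pathGraph 4) s`. Each of these contains a Gem, co-Gem, Bull or `C₅`, and
conversely each of these four graphs switches to `P₄` at one of its vertices; both facts are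
finite checks with explicit embeddings.
-/

section

variable {U V W : Type*}

def unswitch (H : SimpleGraph W) (s : W → Bool) : SimpleGraph (Option W) where
  Adj
    | some a, some b => Xor (H.Adj a b) (Xor (s a) (s b))
    | some a, none => s a
    | none, some b => s b
    | none, none => False
  symm := ⟨by rintro (_ | a) (_ | b) h <;> simp_all [xor_comm, H.adj_comm]⟩
  loopless := ⟨by rintro (_ | a) h <;> simp_all⟩

@[simp]
theorem unswitch_adj_some_some (H : SimpleGraph W) (s : W → Bool) (a b : W) :
    (unswitch H s).Adj (some a) (some b) ↔ Xor (H.Adj a b) (Xor (s a) (s b)) := Iff.rfl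

@[simp]
theorem seidelSwitch_adj (G : SimpleGraph V) (p : V) (x y : {v // v ≠ p}) :
    (seidelSwitch G p).Adj x y ↔ Xor (G.Adj x y) (Xor (G.Adj p x) (G.Adj p y)) := Iff.rfl

instance (H : SimpleGraph W) [DecidableRel H.Adj] (s : W → Bool) :
    DecidableRel (unswitch H s).Adj
  | some _, some _ => inferInstanceAs (Decidable (Xor _ _))
  | some _, none => inferInstanceAs (Decidable (_ = true))
  | none, some _ => inferInstanceAs (Decidable (_ = true))
  | none, none => inferInstanceAs (Decidable False)

theorem IsInducedFree.of_embedding {H : SimpleGraph U} {G : SimpleGraph V} {G' : SimpleGraph W}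
    (h : IsInducedFree H G) (e : G' ↪g G) : IsInducedFree H G' :=
  ⟨fun f => h.false (e.comp f)⟩

theorem IsSwitchCograph.of_embedding {G : SimpleGraph V} {G' : SimpleGraph W}
    (h : IsSwitchCograph G) (e : G' ↪g G) : IsSwitchCograph G' :=
  ⟨h.1.of_embedding e, h.2.1.of_embedding e, h.2.2.1.of_embedding e, h.2.2.2.of_embedding e⟩

def seidelSwitchEmbedding {H : SimpleGraph U} {G : SimpleGraph V} (g : H ↪g G) (k : U) :
    seidelSwitch H k ↪g seidelSwitch G (g k) where
  toFun v := ⟨g v, g.injective.ne v.2⟩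
  inj' _ _ h := Subtype.ext (g.injective (congrArg Subtype.val h))
  map_rel_iff' {a b} := by
    change Xor (G.Adj (g a) (g b)) (Xor (G.Adj (g k) (g a)) (G.Adj (g k) (g b))) ↔
      Xor (H.Adj a b) (Xor (H.Adj k a) (H.Adj k b))
    simp only [g.map_adj_iff]

def embeddingSeidelSwitchUnswitch (H : SimpleGraph W) (s : W → Bool) :
    H ↪g seidelSwitch (unswitch H s) none where
  toFun w := ⟨some w, Option.some_ne_none w⟩
  inj' _ _ h := Option.some_injective _ (congrArg Subtype.val h)
  map_rel_iff' {a b} := by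
    change Xor ((unswitch H s).Adj (some a) (some b)) (Xor (s a) (s b)) ↔ H.Adj a b
    grind [unswitch_adj_some_some]

def unswitchEmbeddingOfSeidelSwitch {H : SimpleGraph W} {G : SimpleGraph V} {p : V}
    (f : H ↪g seidelSwitch G p) (s : W → Bool) (hs : ∀ w, s w ↔ G.Adj p (f w)) :
    unswitch H s ↪g G where
  toFun o := o.elim p fun w => f w
  inj' := by
    rintro (_ | a) (_ | b) h
    · rfl
    · exact absurd h.symm (f b).2
    · exact absurd h (f a).2
    · exact congrArg some (f.injective (Subtype.ext h))
  map_rel_iff' {a b} := by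
    rcases a with _ | a <;> rcases b with _ | b
    · exact iff_of_false G.irrefl (unswitch H s).irrefl
    · exact (hs b).symm
    · exact (G.adj_comm _ _).trans (hs a).symm
    · change G.Adj (f a) (f b) ↔ _
      rw [unswitch_adj_some_some, ← f.map_adj_iff, seidelSwitch_adj, hs, hs]
      grind

theorem exists_embedding_seidelSwitch_iff {H : SimpleGraph W} {G : SimpleGraph V} :
    (∃ p, Nonempty (H ↪g seidelSwitch G p)) ↔ ∃ s, Nonempty (unswitch H s ↪g G) := by
  classical
  constructor
  · rintro ⟨p, ⟨f⟩⟩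
    exact ⟨fun w => G.Adj p (f w),
      ⟨unswitchEmbeddingOfSeidelSwitch f _ fun _ => decide_eq_true_iff⟩⟩
  · rintro ⟨s, ⟨g⟩⟩
    exact ⟨g none,
      ⟨(seidelSwitchEmbedding g none).comp (embeddingSeidelSwitchUnswitch H s)⟩⟩

instance (n : ℕ) : DecidableRel (pathGraph n).Adj :=
  fun _ _ => decidable_of_iff _ pathGraph_adj.symm

instance : DecidableRel gem.Adj := fun a b => decidable_of_iff' _ (fromRel_adj _ a b)

instance : DecidableRel bull.Adj := fun a b => decidable_of_iff' _ (fromRel_adj _ a b)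

theorem not_isSwitchCograph_unswitch_pathGraph (s : Fin 4 → Bool) :
    ¬IsSwitchCograph (unswitch (pathGraph 4) s) := by
  rw [show s = ![s 0, s 1, s 2, s 3] by ext i; fin_cases i <;> rfl]
  cases s 0 <;> cases s 1 <;> cases s 2 <;> cases s 3 <;> rintro ⟨hgem, hcogem, hbull, hc5⟩
  · exact hcogem.false ⟨⟨![some 1, some 3, some 0, some 2, none], by decide⟩, by decide⟩
  · exact hbull.false ⟨⟨![some 1, some 3, some 0, some 2, none], by decide⟩, by decide⟩
  · exact hcogem.false ⟨⟨![some 0, none, some 1, some 2, some 3], by decide⟩, by decide⟩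
  · exact hgem.false ⟨⟨![some 1, some 0, some 2, none, some 3], by decide⟩, by decide⟩
  · exact hcogem.false ⟨⟨![some 1, some 2, none, some 3, some 0], by decide⟩, by decide⟩
  · exact hcogem.false ⟨⟨![some 3, some 1, some 0, none, some 2], by decide⟩, by decide⟩
  · exact hbull.false ⟨⟨![some 1, some 2, none, some 3, some 0], by decide⟩, by decide⟩
  · exact hgem.false ⟨⟨![some 0, some 3, none, some 1, some 2], by decide⟩, by decide⟩
  · exact hbull.false ⟨⟨![some 0, some 2, some 3, none, some 1], by decide⟩, by decide⟩
  · exact hc5.false ⟨⟨![some 0, some 2, some 1, some 3, none], by decide⟩, by decide⟩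
  · exact hcogem.false ⟨⟨![some 0, some 2, some 3, none, some 1], by decide⟩, by decide⟩
  · exact hbull.false ⟨⟨![some 3, none, some 2, some 1, some 0], by decide⟩, by decide⟩
  · exact hgem.false ⟨⟨![some 2, some 3, some 1, none, some 0], by decide⟩, by decide⟩
  · exact hbull.false ⟨⟨![some 0, none, some 1, some 2, some 3], by decide⟩, by decide⟩
  · exact hgem.false ⟨⟨![some 2, none, some 0, some 3, some 1], by decide⟩, by decide⟩
  · exact hgem.false ⟨⟨![some 0, some 1, some 2, some 3, none], by decide⟩, by decide⟩

theorem not_isSwitchCograph_iff_exists_unswitch_pathGraph {G : SimpleGraph V} :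
    ¬IsSwitchCograph G ↔ ∃ s : Fin 4 → Bool, Nonempty (unswitch (pathGraph 4) s ↪g G) := by
  constructor
  · intro h
    simp only [IsSwitchCograph, IsInducedFree, not_and_or, not_isEmpty_iff] at h
    rcases h with ⟨⟨g⟩⟩ | ⟨⟨g⟩⟩ | ⟨⟨g⟩⟩ | ⟨⟨g⟩⟩
    -- each forbidden graph, switched at vertex `0`, is the path through the listed vertices
    · exact ⟨![false, false, true, true],
        ⟨g.comp ⟨⟨(Option.elim · 0 ![2, 3, 1, 4]), by decide⟩, by decide⟩⟩⟩
    · exact ⟨![false, true, false, true],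
        ⟨g.comp ⟨⟨(Option.elim · 0 ![1, 2, 4, 3]), by decide⟩, by decide⟩⟩⟩
    · exact ⟨![true, true, false, true],
        ⟨g.comp ⟨⟨(Option.elim · 0 ![1, 2, 4, 3]), by decide⟩, by decide⟩⟩⟩
    · exact ⟨![true, false, false, true],
        ⟨g.comp ⟨⟨(Option.elim · 0 ![1, 3, 2, 4]), by decide⟩, by decide⟩⟩⟩
  · rintro ⟨s, ⟨e⟩⟩ h
    exact not_isSwitchCograph_unswitch_pathGraph s (h.of_embedding e)

end

theorem isSwitchCograph_iff_seidelSwitch_cograph_general {V : Type*}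
    (G : SimpleGraph V) :
    IsSwitchCograph G ↔ ∀ p : V, IsInducedFree (pathGraph 4) (seidelSwitch G p) := by
  rw [← not_iff_not, not_isSwitchCograph_iff_exists_unswitch_pathGraph]
  simp only [IsInducedFree, not_forall, not_isEmpty_iff]
  exact exists_embedding_seidelSwitch_iff.symm

/-- A graph is a switch cograph (totally decomposable by involution modular
decomposition, i.e. (Gem, co-Gem, Bull, C₅)-free) iff for every vertex `p`, the
Seidel switch of `G` at `p` is a cograph (`P₄`-free). -/
theorem isSwitchCograph_iff_seidelSwitch_cograph {V : Type*} [Fintype V] [DecidableEq V]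
    (G : SimpleGraph V) :
    IsSwitchCograph G ↔ ∀ p : V, IsInducedFree (pathGraph 4) (seidelSwitch G p) :=
  isSwitchCograph_iff_seidelSwitch_cograph_general G
end

section
/- Let G be a graph whose binary involution modular decomposition tree has a clique node N=(N₁,N₂) with children A=(A₁,A₂) and B=(B₁,B₂), where all edges are present between A₁ and B₁ and between A₂ and B₂, and no edges between A₁ and B₂ or between A₂ and B₁. Then the maximum clique size of G_[N] equals the maximum of: ω(G_[A₁])+ω(G_[B₁]), ω(G_[A₂])+ω(G_[B₂]), ω(G_[A]), ω(G_[B]). -/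
/-!
A clique of `G` cannot meet both `A₁` and `B₂`, nor both `A₂` and `B₁`, since these pairs span
no edges. Hence every clique lies in `A₁ ∪ A₂`, in `B₁ ∪ B₂`, in `A₁ ∪ B₁` or in `A₂ ∪ B₂`, which
bounds `ω(G)` by the maximum. Conversely, by the complete joins, a clique of `A₁` together with
a clique of `B₁` (and likewise for `A₂`, `B₂`) is a clique of `G`.
-/

open Finset

namespace SimpleGraph

variable {α : Type*} {G : SimpleGraph α}

lemma exists_isNClique_cliqueNum_induce (s : Set α) :
    ∃ t : Finset α, (t : Set α) ⊆ s ∧ G.IsNClique (G.induce s).cliqueNum t := by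
  obtain ⟨t, ht⟩ := (G.induce s).exists_isNClique_cliqueNum
  refine ⟨t.map (.subtype _), ?_, (isNClique_induce_iff s t _).1 ht⟩
  simp

lemma IsClique.disjoint_or_disjoint_of_forall_not_adj {s t u : Set α} (hu : G.IsClique u)
    (hst : Disjoint s t) (h : ∀ x ∈ s, ∀ y ∈ t, ¬ G.Adj x y) : Disjoint u s ∨ Disjoint u t := by
  by_contra! hmeet
  obtain ⟨x, hxu, hxs⟩ := Set.not_disjoint_iff.1 hmeet.1
  obtain ⟨y, hyu, hyt⟩ := Set.not_disjoint_iff.1 hmeet.2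
  exact h x hxs y hyt (hu hxu hyu (hst.ne_of_mem hxs hyt))

variable [Finite α]

lemma IsClique.card_le_cliqueNum_induce {s : Set α} {t : Finset α} (ht : G.IsClique (t : Set α))
    (hts : (t : Set α) ⊆ s) : #t ≤ (G.induce s).cliqueNum := by
  classical
  have hmap : (t.subtype (· ∈ s)).map (.subtype _) = t := by
    rw [Finset.subtype_map, Finset.filter_true_of_mem fun x hx => hts hx]
  have hclique : (G.induce s).IsNClique #t (t.subtype (· ∈ s)) := by
    rw [isNClique_induce_iff, hmap]
    exact ⟨ht, rfl⟩
  exact hclique.card_eq ▸ hclique.isClique.card_le_cliqueNum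

lemma IsClique.card_le_cliqueNum_induce_add {s t : Set α} {u : Finset α}
    (hu : G.IsClique (u : Set α)) (hst : (u : Set α) ⊆ s ∪ t) :
    #u ≤ (G.induce s).cliqueNum + (G.induce t).cliqueNum := by
  classical
  have hsplit : u ⊆ u.filter (· ∈ s) ∪ u.filter (· ∈ t) := fun x hx => by
    simpa [hx] using hst hx
  calc #u ≤ #(u.filter (· ∈ s)) + #(u.filter (· ∈ t)) :=
        (card_le_card hsplit).trans (card_union_le _ _)
    _ ≤ _ := by
      gcongr <;>
        exact IsClique.card_le_cliqueNum_induce (hu.subset (coe_subset.2 (filter_subset _ _)))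
          fun x hx => (mem_filter.1 hx).2

lemma cliqueNum_induce_add_le_of_forall_adj {s t : Set α} (h : ∀ x ∈ s, ∀ y ∈ t, G.Adj x y) :
    (G.induce s).cliqueNum + (G.induce t).cliqueNum ≤ G.cliqueNum := by
  classical
  obtain ⟨u, hus, hu⟩ := G.exists_isNClique_cliqueNum_induce s
  obtain ⟨v, hvt, hv⟩ := G.exists_isNClique_cliqueNum_induce t
  have hdisj : Disjoint u v :=
    Finset.disjoint_left.2 fun x hxu hxv => (h x (hus hxu) x (hvt hxv)).ne rfl
  have hclique : G.IsClique ((u ∪ v : Finset α) : Set α) := by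
    rw [coe_union]
    exact Set.pairwise_union.2 ⟨hu.isClique, hv.isClique, fun x hx y hy _ =>
      ⟨h x (hus hx) y (hvt hy), (h x (hus hx) y (hvt hy)).symm⟩⟩
  calc (G.induce s).cliqueNum + (G.induce t).cliqueNum = #(u ∪ v) := by
        rw [card_union_of_disjoint hdisj, hu.card_eq, hv.card_eq]
    _ ≤ G.cliqueNum := hclique.card_le_cliqueNum

end SimpleGraph

theorem cliqueNum_clique_node_general {V : Type*} [Fintype V] [DecidableEq V]
    (G : SimpleGraph V) (A₁ A₂ B₁ B₂ : Finset V)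
    (hcover : A₁ ∪ A₂ ∪ B₁ ∪ B₂ = Finset.univ)
    (hAB₂ : Disjoint A₁ B₂)
    (hAB₃ : Disjoint A₂ B₁)
    (h11 : ∀ x ∈ A₁, ∀ y ∈ B₁, G.Adj x y)
    (h22 : ∀ x ∈ A₂, ∀ y ∈ B₂, G.Adj x y)
    (h12 : ∀ x ∈ A₁, ∀ y ∈ B₂, ¬ G.Adj x y)
    (h21 : ∀ x ∈ A₂, ∀ y ∈ B₁, ¬ G.Adj x y) :
    G.cliqueNum =
      max (max ((G.induce (A₁ : Set V)).cliqueNum + (G.induce (B₁ : Set V)).cliqueNum)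
               ((G.induce (A₂ : Set V)).cliqueNum + (G.induce (B₂ : Set V)).cliqueNum))
          (max ((G.induce ((A₁ ∪ A₂ : Finset V) : Set V)).cliqueNum)
               ((G.induce ((B₁ ∪ B₂ : Finset V) : Set V)).cliqueNum)) := by
  refine le_antisymm ?_ (max_le (max_le ?_ ?_) (max_le ?_ ?_))
  · obtain ⟨u, hu⟩ := G.exists_isNClique_cliqueNum
    have hcov : (u : Set V) ⊆ ↑A₁ ∪ ↑A₂ ∪ ↑B₁ ∪ ↑B₂ := by
      simp only [← coe_union, hcover, coe_univ, Set.subset_univ]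
    rw [← hu.card_eq]
    rcases hu.isClique.disjoint_or_disjoint_of_forall_not_adj (disjoint_coe.2 hAB₂) h12
      with hA₁ | hB₂ <;>
    rcases hu.isClique.disjoint_or_disjoint_of_forall_not_adj (disjoint_coe.2 hAB₃) h21
      with hA₂ | hB₁
    · exact le_max_of_le_right (le_max_of_le_right
        (hu.isClique.card_le_cliqueNum_induce (by grind)))
    · exact le_max_of_le_left (le_max_of_le_right
        (hu.isClique.card_le_cliqueNum_induce_add (by grind)))
    · exact le_max_of_le_left (le_max_of_le_left
        (hu.isClique.card_le_cliqueNum_induce_add (by grind)))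
    · exact le_max_of_le_right (le_max_of_le_left
        (hu.isClique.card_le_cliqueNum_induce (by grind)))
  · exact G.cliqueNum_induce_add_le_of_forall_adj h11
  · exact G.cliqueNum_induce_add_le_of_forall_adj h22
  · exact G.cliqueNum_induce_le _
  · exact G.cliqueNum_induce_le _

/-- Maximum clique at a clique node of the binary involution modular decomposition
tree.  Suppose the vertices of `G` are partitioned into `A₁, A₂, B₁, B₂` with complete
joins `A₁–B₁` and `A₂–B₂` and no edges `A₁–B₂` nor `A₂–B₁`.  Then the maximum clique
size of `G` is the maximum of `ω(A₁)+ω(B₁)`, `ω(A₂)+ω(B₂)`, `ω(A₁∪A₂)` and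
`ω(B₁∪B₂)`. -/
theorem cliqueNum_clique_node {V : Type*} [Fintype V] [DecidableEq V]
    (G : SimpleGraph V) (A₁ A₂ B₁ B₂ : Finset V)
    (hcover : A₁ ∪ A₂ ∪ B₁ ∪ B₂ = Finset.univ)
    (hA : Disjoint A₁ A₂) (hB : Disjoint B₁ B₂)
    (hAB₁ : Disjoint A₁ B₁) (hAB₂ : Disjoint A₁ B₂)
    (hAB₃ : Disjoint A₂ B₁) (hAB₄ : Disjoint A₂ B₂)
    (h11 : ∀ x ∈ A₁, ∀ y ∈ B₁, G.Adj x y)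
    (h22 : ∀ x ∈ A₂, ∀ y ∈ B₂, G.Adj x y)
    (h12 : ∀ x ∈ A₁, ∀ y ∈ B₂, ¬ G.Adj x y)
    (h21 : ∀ x ∈ A₂, ∀ y ∈ B₁, ¬ G.Adj x y) :
    G.cliqueNum =
      max (max ((G.induce (A₁ : Set V)).cliqueNum + (G.induce (B₁ : Set V)).cliqueNum)
               ((G.induce (A₂ : Set V)).cliqueNum + (G.induce (B₂ : Set V)).cliqueNum))
          (max ((G.induce ((A₁ ∪ A₂ : Finset V) : Set V)).cliqueNum)
               ((G.induce ((B₁ ∪ B₂ : Finset V) : Set V)).cliqueNum)) :=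
  cliqueNum_clique_node_general G A₁ A₂ B₁ B₂ hcover hAB₂ hAB₃ h11 h22 h12 h21
end

section
/- Let G be a graph whose vertex set is partitioned into A₁, A₂, B₁, B₂ such that A₁–B₁ and A₂–B₂ are complete joins while A₁–B₂ and A₂–B₁ have no edges. Then the minimum vertex cover of G equals the minimum over: |A₁|+|A₂| + vc(G_[B₁∪B₂]); |B₁|+|B₂| + vc(G_[A₁∪A₂]); |A₁|+|B₂| + vc(G_[B₁]) + vc(G_[A₂]); |A₂|+|B₁| + vc(G_[B₂]) + vc(G_[A₁]). -/
/-!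
Since `A₁–B₁` is a complete join, every vertex cover contains all of `A₁` or all of `B₁`;
likewise for `A₂–B₂`. So a minimum cover `S` contains one of `X = A₁ ∪ A₂`, `B₁ ∪ B₂`,
`A₁ ∪ B₂`, `A₂ ∪ B₁`, and `S \ X` covers the graph induced on the complement `Y`, giving
`|X| + vc(G[Y]) ≤ vc(G)`; conversely `X` plus a cover of `G[Y]` covers `G`. For the two mixed
choices `Y` is `B₁ ∪ A₂` or `B₂ ∪ A₁`, which has no edges between its two parts, so its
cover number is the sum of theirs.
-/

open SimpleGraph

/-- The minimum size of a vertex cover of `G`. -/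
noncomputable def vcNum {W : Type*} (G : SimpleGraph W) : ℕ :=
  sInf {n : ℕ | ∃ S : Finset W, S.card = n ∧ ∀ x y : W, G.Adj x y → x ∈ S ∨ y ∈ S}

open Finset

namespace SimpleGraph

variable {V : Type*} {G : SimpleGraph V}

theorem IsVertexCover.subset_or_subset_of_forall_adj {c A B : Set V} (hc : G.IsVertexCover c)
    (hAB : ∀ x ∈ A, ∀ y ∈ B, G.Adj x y) : A ⊆ c ∨ B ⊆ c := by
  by_contra! h
  obtain ⟨⟨a, ha, hac⟩, ⟨b, hb, hbc⟩⟩ := And.imp Set.not_subset.mp Set.not_subset.mp h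
  rcases hc (hAB a ha b hb) with h | h <;> contradiction

theorem vcNum_le_card {S : Finset V} (hS : G.IsVertexCover S) : vcNum G ≤ #S :=
  Nat.sInf_le ⟨S, rfl, fun _ _ h => hS h⟩

variable (G) in
theorem exists_isVertexCover_card_eq_vcNum [Fintype V] :
    ∃ S : Finset V, G.IsVertexCover S ∧ #S = vcNum G := by
  obtain ⟨S, hS, hcov⟩ := Nat.sInf_mem (s := {n : ℕ | ∃ S : Finset V, #S = n ∧
    ∀ x y : V, G.Adj x y → x ∈ S ∨ y ∈ S}) ⟨_, univ, rfl, fun x _ _ => .inl (mem_univ x)⟩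
  exact ⟨S, fun _ _ h => hcov _ _ h, hS⟩

variable (G) in
theorem exists_isVertexCover_induce_card_eq_vcNum [Fintype V] (s : Finset V) :
    ∃ T : Finset V, (G.induce s).IsVertexCover (Subtype.val ⁻¹' T) ∧
      #T = vcNum (G.induce s) := by
  obtain ⟨S, hS, hcard⟩ := exists_isVertexCover_card_eq_vcNum (G.induce s)
  refine ⟨S.map (Function.Embedding.subtype _), ?_, by simpa using hcard⟩
  simpa using hS

variable [DecidableEq V]

theorem vcNum_induce_le_card_inter {s T : Finset V}
    (hT : (G.induce s).IsVertexCover (Subtype.val ⁻¹' T)) :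
    vcNum (G.induce s) ≤ #(T ∩ s) := by
  refine (vcNum_le_card (S := T.subtype (· ∈ (s : Set V))) ?_).trans_eq ?_
  · convert hT
    ext
    simp
  · simp [card_subtype, filter_mem_eq_inter]

theorem vcNum_le_card_add_vcNum_induce [Fintype V] {X Y : Finset V} (hXY : X ∪ Y = univ) :
    vcNum G ≤ #X + vcNum (G.induce Y) := by
  obtain ⟨T, hT, hcard⟩ := exists_isVertexCover_induce_card_eq_vcNum G Y
  have hcover : G.IsVertexCover ↑(X ∪ T) := by
    intro x y hxy
    by_cases hx : x ∈ X
    · exact .inl (mem_union_left T hx)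
    by_cases hy : y ∈ X
    · exact .inr (mem_union_left T hy)
    have hY : ∀ z ∉ X, z ∈ Y := fun z hz => (mem_union.mp (hXY ▸ mem_univ z)).resolve_left hz
    exact (@hT ⟨x, hY x hx⟩ ⟨y, hY y hy⟩ hxy).imp (mem_union_right X) (mem_union_right X)
  calc vcNum G ≤ #(X ∪ T) := vcNum_le_card hcover
    _ ≤ #X + #T := card_union_le X T
    _ = #X + vcNum (G.induce Y) := by rw [hcard]

theorem card_add_vcNum_induce_le_card {S X Y : Finset V} (hS : G.IsVertexCover S)
    (hXS : X ⊆ S) (hXY : Disjoint X Y) : #X + vcNum (G.induce Y) ≤ #S := by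
  have hY : vcNum (G.induce Y) ≤ #(S ∩ Y) :=
    vcNum_induce_le_card_inter (hS.preimage (Embedding.induce (Y : Set V)))
  calc #X + vcNum (G.induce Y) ≤ #X + #(S ∩ Y) := by gcongr
    _ = #(X ∪ S ∩ Y) := (card_union_of_disjoint (hXY.mono_right inter_subset_right)).symm
    _ ≤ #S := card_le_card (union_subset hXS inter_subset_left)

theorem vcNum_induce_union [Fintype V] {s t : Finset V} (hst : Disjoint s t)
    (hadj : ∀ x ∈ s, ∀ y ∈ t, ¬ G.Adj x y) :
    vcNum (G.induce ↑(s ∪ t)) = vcNum (G.induce s) + vcNum (G.induce t) := by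
  apply le_antisymm
  · obtain ⟨T₁, hT₁, hcard₁⟩ := exists_isVertexCover_induce_card_eq_vcNum G s
    obtain ⟨T₂, hT₂, hcard₂⟩ := exists_isVertexCover_induce_card_eq_vcNum G t
    have hcover : (G.induce ↑(s ∪ t)).IsVertexCover (Subtype.val ⁻¹' ↑(T₁ ∪ T₂)) := by
      rintro ⟨x, hx⟩ ⟨y, hy⟩ hxy
      simp only [coe_union, Set.mem_union, mem_coe] at hx hy
      rcases hx with hx | hx <;> rcases hy with hy | hy
      · exact (@hT₁ ⟨x, hx⟩ ⟨y, hy⟩ hxy).imp (mem_union_left T₂) (mem_union_left T₂)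
      · exact absurd hxy (hadj x hx y hy)
      · exact absurd hxy.symm (hadj y hy x hx)
      · exact (@hT₂ ⟨x, hx⟩ ⟨y, hy⟩ hxy).imp (mem_union_right T₁) (mem_union_right T₁)
    calc vcNum (G.induce ↑(s ∪ t)) ≤ #((T₁ ∪ T₂) ∩ (s ∪ t)) := vcNum_induce_le_card_inter hcover
      _ ≤ #T₁ + #T₂ := (card_le_card inter_subset_left).trans (card_union_le T₁ T₂)
      _ = _ := by rw [hcard₁, hcard₂]
  · obtain ⟨T, hT, hcard⟩ := exists_isVertexCover_induce_card_eq_vcNum G ↑(s ∪ t)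
    have hTs : vcNum (G.induce s) ≤ #(T ∩ s) := vcNum_induce_le_card_inter
      fun x y hxy => @hT ⟨x, mem_union_left t x.2⟩ ⟨y, mem_union_left t y.2⟩ hxy
    have hTt : vcNum (G.induce t) ≤ #(T ∩ t) := vcNum_induce_le_card_inter
      fun x y hxy => @hT ⟨x, mem_union_right s x.2⟩ ⟨y, mem_union_right s y.2⟩ hxy
    calc vcNum (G.induce s) + vcNum (G.induce t) ≤ #(T ∩ s) + #(T ∩ t) := add_le_add hTs hTt
      _ = #(T ∩ s ∪ T ∩ t) := (card_union_of_disjoint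
          (hst.mono inter_subset_right inter_subset_right)).symm
      _ ≤ #T := card_le_card (union_subset inter_subset_left inter_subset_left)
      _ = _ := hcard

end SimpleGraph

/-- Minimum vertex cover at a clique node.  Suppose the vertices of `G` are
partitioned into `A₁, A₂, B₁, B₂` with complete joins `A₁–B₁` and `A₂–B₂` and no
edges `A₁–B₂` nor `A₂–B₁`.  Then the minimum vertex cover of `G` equals the minimum
of `|A₁|+|A₂|+vc(B₁∪B₂)`, `|B₁|+|B₂|+vc(A₁∪A₂)`, `|A₁|+|B₂|+vc(B₁)+vc(A₂)` and
`|A₂|+|B₁|+vc(B₂)+vc(A₁)`. -/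
theorem vcNum_clique_node {V : Type*} [Fintype V] [DecidableEq V]
    (G : SimpleGraph V) (A₁ A₂ B₁ B₂ : Finset V)
    (hcover : A₁ ∪ A₂ ∪ B₁ ∪ B₂ = Finset.univ)
    (hA : Disjoint A₁ A₂) (hB : Disjoint B₁ B₂)
    (hAB₁ : Disjoint A₁ B₁) (hAB₂ : Disjoint A₁ B₂)
    (hAB₃ : Disjoint A₂ B₁) (hAB₄ : Disjoint A₂ B₂)
    (h11 : ∀ x ∈ A₁, ∀ y ∈ B₁, G.Adj x y)
    (h22 : ∀ x ∈ A₂, ∀ y ∈ B₂, G.Adj x y)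
    (h12 : ∀ x ∈ A₁, ∀ y ∈ B₂, ¬ G.Adj x y)
    (h21 : ∀ x ∈ A₂, ∀ y ∈ B₁, ¬ G.Adj x y) :
    vcNum G =
      min (min (A₁.card + A₂.card + vcNum (G.induce ((B₁ ∪ B₂ : Finset V) : Set V)))
               (B₁.card + B₂.card + vcNum (G.induce ((A₁ ∪ A₂ : Finset V) : Set V))))
          (min (A₁.card + B₂.card + vcNum (G.induce (B₁ : Set V))
                  + vcNum (G.induce (A₂ : Set V)))
               (A₂.card + B₁.card + vcNum (G.induce (B₂ : Set V))
                  + vcNum (G.induce (A₁ : Set V)))) := by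
  rw [add_assoc (#A₁ + #B₂), add_assoc (#A₂ + #B₁),
    ← vcNum_induce_union hAB₃.symm fun x hx y hy h => h21 y hy x hx h.symm,
    ← vcNum_induce_union hAB₂.symm fun x hx y hy h => h12 y hy x hx h.symm,
    ← card_union_of_disjoint hA, ← card_union_of_disjoint hB,
    ← card_union_of_disjoint hAB₂, ← card_union_of_disjoint hAB₃]
  -- each term now reads `#X + vcNum (G.induce Y)` for a partition `univ = X ⊔ Y`
  symm
  refine le_antisymm ?_ (le_min (le_min ?_ ?_) (le_min ?_ ?_))
  · obtain ⟨S, hS, hcard⟩ := exists_isVertexCover_card_eq_vcNum G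
    rw [← hcard]
    rcases hS.subset_or_subset_of_forall_adj h11 with h₁ | h₁ <;>
      rcases hS.subset_or_subset_of_forall_adj h22 with h₂ | h₂ <;>
      rw [coe_subset] at h₁ h₂
    · refine min_le_of_left_le <| min_le_of_left_le <|
        card_add_vcNum_induce_le_card hS (union_subset h₁ h₂) ?_
      simp [disjoint_comm, *]
    · refine min_le_of_right_le <| min_le_of_left_le <|
        card_add_vcNum_induce_le_card hS (union_subset h₁ h₂) ?_
      simp [disjoint_comm, *]
    · refine min_le_of_right_le <| min_le_of_right_le <|
        card_add_vcNum_induce_le_card hS (union_subset h₂ h₁) ?_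
      simp [disjoint_comm, *]
    · refine min_le_of_left_le <| min_le_of_right_le <|
        card_add_vcNum_induce_le_card hS (union_subset h₁ h₂) ?_
      simp [disjoint_comm, *]
  all_goals
    refine vcNum_le_card_add_vcNum_induce ?_
    rw [← hcover]
    ac_rfl
end
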